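/- Every positive logic P is the positive fragment of a superintuitionistic logic; moreover Int + P is the least superintuitionistic logic whose positive fragment is P, i.e., P = (Int + P) ∩ Frm⁺ and any superintuitionistic logic L with L ∩ Frm⁺ = P satisfies Int + P ⊆ L. -/

import Mathlib

/-- Propositional formulas over ∧, ∨, →, ⊥ and variables. -/
inductive Fml : Type
  | var : ℕ → Fml
  | bot : Fml
  | and : Fml → Fml → Fml
  | or  : Fml → Fml → Fml
  | imp : Fml → Fml → Fml

namespace Fml

/-- A formula is positive if it contains no ⊥. -/
def Positive : Fml → Prop
  | var _ => True
  | bot => False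
  | and A B => A.Positive ∧ B.Positive
  | or A B => A.Positive ∧ B.Positive
  | imp A B => A.Positive ∧ B.Positive

/-- Evaluation in a Brouwerian (generalized Heyting) algebra, with a designated
value `z` interpreting ⊥. -/
def evalB {α : Type} [GeneralizedHeytingAlgebra α] (z : α) (ν : ℕ → α) : Fml → α
  | var n => ν n
  | bot => z
  | and A B => A.evalB z ν ⊓ B.evalB z ν
  | or A B => A.evalB z ν ⊔ B.evalB z ν
  | imp A B => A.evalB z ν ⇨ B.evalB z ν

/-- Evaluation in a Heyting algebra (⊥ interpreted as the least element). -/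
def eval {α : Type} [HeytingAlgebra α] (ν : ℕ → α) (A : Fml) : α := A.evalB ⊥ ν

/-- Evaluation of (positive) formulas in a Brouwerian algebra
(⊥ gets the junk value ⊤; it is irrelevant for positive formulas). -/
def pEval {α : Type} [GeneralizedHeytingAlgebra α] (ν : ℕ → α) (A : Fml) : α := A.evalB ⊤ ν

/-- Substitution. -/
def subst (σ : ℕ → Fml) : Fml → Fml
  | var n => σ n
  | bot => bot
  | and A B => and (A.subst σ) (B.subst σ)
  | or A B => or (A.subst σ) (B.subst σ)
  | imp A B => imp (A.subst σ) (B.subst σ)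

/-- Replacing every occurrence of ⊥ by the formula `C`. -/
def substBot : Fml → Fml → Fml
  | var n, _ => var n
  | bot, C => C
  | and A B, C => and (A.substBot C) (B.substBot C)
  | or A B, C => or (A.substBot C) (B.substBot C)
  | imp A B, C => imp (A.substBot C) (B.substBot C)

/-- The set of variables occurring in a formula. -/
def vars : Fml → Finset ℕ
  | var n => {n}
  | bot => ∅
  | and A B => A.vars ∪ B.vars
  | or A B => A.vars ∪ B.vars
  | imp A B => A.vars ∪ B.vars

end Fml

/-- The set of positive formulas. -/
def PosFml : Set Fml := {A | A.Positive}

/-- A substitution is positive if all its values are positive formulas. -/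
def PosSubst (σ : ℕ → Fml) : Prop := ∀ n, (σ n).Positive

/-- Validity of a formula in a Heyting algebra. -/
def ValidH (α : Type) [HeytingAlgebra α] (A : Fml) : Prop := ∀ ν : ℕ → α, A.eval ν = ⊤

/-- Intuitionistic propositional logic (via algebraic semantics). -/
def IntL : Set Fml := {A | ∀ (α : Type) [HeytingAlgebra α], ValidH α A}

/-- Superintuitionistic logics. -/
structure IsSILogic (L : Set Fml) : Prop where
  int_sub : IntL ⊆ L
  mp : ∀ A B : Fml, Fml.imp A B ∈ L → A ∈ L → B ∈ L
  subst_closed : ∀ A ∈ L, ∀ σ : ℕ → Fml, A.subst σ ∈ L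

/-- The least superintuitionistic logic containing `Γ`. -/
def IntPlus (Γ : Set Fml) : Set Fml := ⋂₀ {L | IsSILogic L ∧ Γ ⊆ L}

/-- The positive fragment of intuitionistic logic. -/
def IntLPos : Set Fml := IntL ∩ PosFml

/-- Positive logics. -/
structure IsPosLogic (P : Set Fml) : Prop where
  pos : P ⊆ PosFml
  int_sub : IntLPos ⊆ P
  mp : ∀ A B : Fml, Fml.imp A B ∈ P → A ∈ P → B ∈ P
  subst_closed : ∀ A ∈ P, ∀ σ : ℕ → Fml, PosSubst σ → A.subst σ ∈ P

/-- The least positive logic containing `Γ`. -/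
def IntPosPlus (Γ : Set Fml) : Set Fml := ⋂₀ {P | IsPosLogic P ∧ Γ ⊆ P}

/-- Homomorphism of Brouwerian algebras (preserves ⊓, ⊔, ⇨, ⊤). -/
def IsBrHom {α β : Type} [GeneralizedHeytingAlgebra α] [GeneralizedHeytingAlgebra β]
    (f : α → β) : Prop :=
  (∀ a b : α, f (a ⊓ b) = f a ⊓ f b) ∧ (∀ a b : α, f (a ⊔ b) = f a ⊔ f b) ∧
  (∀ a b : α, f (a ⇨ b) = f a ⇨ f b) ∧ f ⊤ = ⊤

/-- A Heyting algebra is a model of a set of formulas `T`. -/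
def Models (α : Type) [HeytingAlgebra α] (T : Set Fml) : Prop := ∀ A ∈ T, ValidH α A

/-- The variety (of Heyting algebras) axiomatized by `T` is B-saturated: any Heyting
algebra whose Brouwerian reduct embeds into the reduct of a model of `T` is itself
a model of `T`. -/
def BSaturated (T : Set Fml) : Prop :=
  ∀ (α : Type) (iα : HeytingAlgebra α),
    (∃ (β : Type) (iβ : HeytingAlgebra β), @Models β iβ T ∧
      ∃ f : α → β, Function.Injective f ∧
        @IsBrHom α β iα.toGeneralizedHeytingAlgebra iβ.toGeneralizedHeytingAlgebra f) →
    @Models α iα T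

/-- A subset of a Brouwerian algebra closed under the Brouwerian operations. -/
def BrClosed {α : Type} [GeneralizedHeytingAlgebra α] (S : Set α) : Prop :=
  ⊤ ∈ S ∧ ∀ a ∈ S, ∀ b ∈ S, a ⊓ b ∈ S ∧ a ⊔ b ∈ S ∧ (a ⇨ b) ∈ S

/-- The Brouwerian subalgebra generated by a set. -/
def genBr {α : Type} [GeneralizedHeytingAlgebra α] (s : Set α) : Set α :=
  ⋂₀ {S | BrClosed S ∧ s ⊆ S}

/-- Conjunction of a list of variables (nonempty case is the intended one). -/
def conjList : List ℕ → Fml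
  | [] => Fml.imp (Fml.var 0) (Fml.var 0)
  | [n] => Fml.var n
  | n :: l => Fml.and (Fml.var n) (conjList l)

/-- The conjunction π^∧ of all variables in a finite set π. -/
def conjOf (π : Finset ℕ) : Fml := conjList (π.sort (· ≤ ·))

/-- Multiple-conclusion rules. -/
def MRule : Type := Finset Fml × Finset Fml

/-- A rule is positive if all its premises and conclusions are positive. -/
def PosRule (r : MRule) : Prop := (∀ A ∈ r.1, A.Positive) ∧ (∀ B ∈ r.2, B.Positive)

/-- Validity of a (positive) m-rule in a Brouwerian algebra. -/
def RuleValid (α : Type) [GeneralizedHeytingAlgebra α] (r : MRule) : Prop :=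
  ∀ ν : ℕ → α, (∀ A ∈ r.1, A.pEval ν = ⊤) → ∃ B ∈ r.2, B.pEval ν = ⊤

/-- A Brouwerian algebra is a model of a set of positive formulas. -/
def ModelsP (β : Type) [GeneralizedHeytingAlgebra β] (P : Set Fml) : Prop :=
  ∀ A ∈ P, ∀ ν : ℕ → β, A.pEval ν = ⊤

/-- Filter of a Brouwerian (or Heyting) algebra. -/
def IsFilter' {α : Type} [GeneralizedHeytingAlgebra α] (F : Set α) : Prop :=
  ⊤ ∈ F ∧ ∀ a b : α, a ∈ F → (a ⇨ b) ∈ F → b ∈ F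

/-! The positive fragment of `Int + P` is `P` because `Int + P` is contained in the logic
`guardedLogic P` of all `A` such that `(⋀_{p ∈ var A} (f → p)) → A[f/⊥] ∈ P` for every variable
`f`: `⊥` is read as a variable lying below all variables of `A`. For positive `A` the guard is
discharged by substituting `⋀ var A` for `f`, so the positive part of this logic is `P`.
It contains `Int` because a Heyting-valid formula stays valid when `⊥` and the variables are
interpreted in an interval `[g ⊓ z, g]` of a Heyting algebra: `x ↦ x ⊓ g` is a homomorphism of
Brouwerian algebras onto `Iic g`, and `Ici z` of a Brouwerian algebra is a Heyting algebra
with bottom `z`. -/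

namespace Fml

theorem substBot_positive {C : Fml} (hC : C.Positive) : ∀ A : Fml, (A.substBot C).Positive
  | var _ => trivial
  | bot => hC
  | and A B | or A B | imp A B => ⟨substBot_positive hC A, substBot_positive hC B⟩

theorem subst_positive {σ : ℕ → Fml} (hσ : PosSubst σ) :
    ∀ {A : Fml}, A.Positive → (A.subst σ).Positive
  | var n, _ => hσ n
  | and _ _, h | or _ _, h | imp _ _, h => ⟨subst_positive hσ h.1, subst_positive hσ h.2⟩

theorem mem_vars_subst {σ : ℕ → Fml} {p q : ℕ} :
    ∀ {A : Fml}, p ∈ A.vars → q ∈ (σ p).vars → q ∈ (A.subst σ).vars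
  | var n, hp, hq => by rw [vars, Finset.mem_singleton] at hp; exact hp ▸ hq
  | and A B, hp, hq | or A B, hp, hq | imp A B, hp, hq => by
    simp only [vars, subst, Finset.mem_union] at hp ⊢
    exact hp.imp (mem_vars_subst · hq) (mem_vars_subst · hq)

section Semantics

variable {α : Type} [GeneralizedHeytingAlgebra α]

theorem evalB_substBot (z : α) (ν : ℕ → α) (C : Fml) :
    ∀ A : Fml, (A.substBot C).evalB z ν = A.evalB (C.evalB z ν) ν
  | var _ | bot => rfl
  | and A B | or A B | imp A B => by
    simp only [substBot, evalB, evalB_substBot z ν C A, evalB_substBot z ν C B]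

theorem evalB_subst (z : α) (ν : ℕ → α) (σ : ℕ → Fml) :
    ∀ A : Fml, (A.subst σ).evalB z ν = A.evalB z (fun n => (σ n).evalB z ν)
  | var _ | bot => rfl
  | and A B | or A B | imp A B => by
    simp only [subst, evalB, evalB_subst z ν σ A, evalB_subst z ν σ B]

theorem evalB_congr (z : α) {ν ν' : ℕ → α} :
    ∀ {A : Fml}, (∀ p ∈ A.vars, ν p = ν' p) → A.evalB z ν = A.evalB z ν'
  | var n, h => h n (Finset.mem_singleton_self n)
  | bot, _ => rfl
  | and A B, h | or A B, h | imp A B, h => by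
    simp only [evalB, evalB_congr z fun p hp => h p (Finset.mem_union_left _ hp),
      evalB_congr z fun p hp => h p (Finset.mem_union_right _ hp)]

theorem evalB_eq_of_positive (z z' : α) (ν : ℕ → α) :
    ∀ {A : Fml}, A.Positive → A.evalB z ν = A.evalB z' ν
  | var _, _ => rfl
  | and _ _, h | or _ _, h | imp _ _, h => by
    simp only [evalB, evalB_eq_of_positive z z' ν h.1, evalB_eq_of_positive z z' ν h.2]

theorem le_evalB {x z : α} {ν : ℕ → α} (hz : x ≤ z) :
    ∀ {A : Fml}, (∀ p ∈ A.vars, x ≤ ν p) → x ≤ A.evalB z ν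
  | var n, h => h n (Finset.mem_singleton_self n)
  | bot, _ => hz
  | and _ _, h => le_inf (le_evalB hz fun p hp => h p (Finset.mem_union_left _ hp))
      (le_evalB hz fun p hp => h p (Finset.mem_union_right _ hp))
  | or _ _, h => le_sup_of_le_left (le_evalB hz fun p hp => h p (Finset.mem_union_left _ hp))
  | imp _ _, h => (le_evalB hz fun p hp => h p (Finset.mem_union_right _ hp)).trans le_himp

theorem evalB_map {β : Type} [GeneralizedHeytingAlgebra β] {φ : α → β} (hφ : IsBrHom φ)
    (z : α) (ν : ℕ → α) : ∀ A : Fml, φ (A.evalB z ν) = A.evalB (φ z) (φ ∘ ν)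
  | var _ | bot => rfl
  | and A B => by rw [evalB, hφ.1, evalB_map hφ z ν A, evalB_map hφ z ν B]; rfl
  | or A B => by rw [evalB, hφ.2.1, evalB_map hφ z ν A, evalB_map hφ z ν B]; rfl
  | imp A B => by rw [evalB, hφ.2.2.1, evalB_map hφ z ν A, evalB_map hφ z ν B]; rfl

end Semantics

end Fml

section HeytingAlgebra

variable {α : Type}

theorem himp_himp_le_himp_himp_himp [GeneralizedHeytingAlgebra α] {a b c : α} :
    a ⇨ b ⇨ c ≤ (a ⇨ b) ⇨ a ⇨ c := by
  rw [le_himp_iff, le_himp_iff]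
  calc (a ⇨ b ⇨ c) ⊓ (a ⇨ b) ⊓ a = (a ⇨ b ⇨ c) ⊓ a ⊓ ((a ⇨ b) ⊓ a) := by ac_rfl
    _ ≤ (b ⇨ c) ⊓ b := inf_le_inf himp_inf_le himp_inf_le
    _ ≤ c := himp_inf_le

instance Set.Ici.instHeytingAlgebra [GeneralizedHeytingAlgebra α] {a : α} :
    HeytingAlgebra (Set.Ici a) :=
  HeytingAlgebra.ofHImp (fun x y => ⟨x ⇨ y, y.2.trans le_himp⟩) fun _ _ _ => le_himp_iff

instance Set.Iic.instDistribLattice [DistribLattice α] {a : α} : DistribLattice (Set.Iic a) :=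
  { (inferInstance : Lattice (Set.Iic a)) with le_sup_inf := fun _ _ _ => le_sup_inf }

instance Set.Iic.instHeytingAlgebra [HeytingAlgebra α] {a : α} : HeytingAlgebra (Set.Iic a) :=
  HeytingAlgebra.ofHImp (fun x y => ⟨(x ⇨ y) ⊓ a, inf_le_right⟩) fun z _ _ => by
    change (z : α) ≤ _ ⊓ a ↔ _
    rw [le_inf_iff, le_himp_iff]
    exact and_iff_left z.2

theorem isBrHom_inf_Iic [HeytingAlgebra α] (a : α) :
    IsBrHom (fun x : α => (⟨x ⊓ a, inf_le_right⟩ : Set.Iic a)) := by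
  refine ⟨fun x y => Subtype.ext ?_, fun x y => Subtype.ext (inf_sup_right x y a),
    fun x y => Subtype.ext ?_, Subtype.ext (top_inf_eq a)⟩
  · exact inf_inf_distrib_right x y a
  · change (x ⇨ y) ⊓ a = ((x ⊓ a) ⇨ (y ⊓ a)) ⊓ a
    rw [himp_inf_distrib, himp_eq_top_iff.2 inf_le_right, inf_top_eq, inf_comm x, ← himp_himp,
      himp_inf_self]

end HeytingAlgebra

namespace Fml

theorem evalB_eq_top_of_mem_IntL {α : Type} [GeneralizedHeytingAlgebra α] {A : Fml}
    (hA : A ∈ IntL) {z : α} {ν : ℕ → α} (h : ∀ p ∈ A.vars, z ≤ ν p) : A.evalB z ν = ⊤ := by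
  let ν' : ℕ → Set.Ici z := fun n => ⟨ν n ⊔ z, le_sup_right⟩
  have hval : IsBrHom (Subtype.val : Set.Ici z → α) :=
    ⟨fun _ _ => rfl, fun _ _ => rfl, fun _ _ => rfl, rfl⟩
  calc A.evalB z ν = A.evalB z (Subtype.val ∘ ν') :=
        evalB_congr z fun p hp => (sup_eq_left.2 (h p hp)).symm
    _ = (A.eval ν').1 := (evalB_map hval ⊥ ν' A).symm
    _ = ⊤ := by rw [hA (Set.Ici z) ν']; rfl

theorem le_evalB_of_mem_IntL {α : Type} [HeytingAlgebra α] {A : Fml} (hA : A ∈ IntL) {g z : α}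
    {ν : ℕ → α} (h : ∀ p ∈ A.vars, g ⊓ z ≤ ν p) : g ≤ A.evalB z ν := by
  have hvars : ∀ p ∈ A.vars, (⟨z ⊓ g, inf_le_right⟩ : Set.Iic g) ≤ ⟨ν p ⊓ g, inf_le_right⟩ :=
    fun p hp => le_inf ((inf_comm z g).trans_le (h p hp)) inf_le_right
  have htop := (evalB_map (isBrHom_inf_Iic g) z ν A).trans (evalB_eq_top_of_mem_IntL hA hvars)
  exact inf_eq_right.1 (congrArg Subtype.val htop)

end Fml

theorem conjList_positive : ∀ l : List ℕ, (conjList l).Positive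
  | [] => ⟨trivial, trivial⟩
  | [_] => trivial
  | _ :: m :: l => ⟨trivial, conjList_positive (m :: l)⟩

section Conjunction

variable {α : Type} [GeneralizedHeytingAlgebra α] {x z : α} {ν : ℕ → α}

theorem le_evalB_conjList_iff : ∀ l : List ℕ, x ≤ (conjList l).evalB z ν ↔ ∀ p ∈ l, x ≤ ν p
  | [] => by simp [conjList, Fml.evalB]
  | [n] => by simp [conjList, Fml.evalB]
  | n :: m :: l => by simp [conjList, Fml.evalB, le_evalB_conjList_iff (m :: l)]

theorem le_evalB_conjOf_iff {S : Finset ℕ} : x ≤ (conjOf S).evalB z ν ↔ ∀ p ∈ S, x ≤ ν p := by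
  simp [conjOf, le_evalB_conjList_iff]

end Conjunction

namespace Fml

def guard (f : ℕ) (S : Finset ℕ) : Fml := (conjOf S).subst fun p => imp (var f) (var p)

def relativize (A : Fml) (f : ℕ) (S : Finset ℕ) : Fml := imp (guard f S) (A.substBot (var f))

theorem guard_positive (f : ℕ) (S : Finset ℕ) : (guard f S).Positive :=
  subst_positive (σ := fun p => imp (var f) (var p)) (fun _ => ⟨trivial, trivial⟩)
    (conjList_positive _)

theorem relativize_positive {A : Fml} {f : ℕ} {S : Finset ℕ} : (A.relativize f S).Positive :=
  ⟨guard_positive f S, substBot_positive (C := var f) trivial A⟩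

variable {α : Type} [GeneralizedHeytingAlgebra α] {x z : α} {ν : ℕ → α} {f : ℕ} {S : Finset ℕ}

theorem le_evalB_guard_iff : x ≤ (guard f S).evalB z ν ↔ ∀ p ∈ S, x ≤ ν f ⇨ ν p := by
  rw [guard, evalB_subst, le_evalB_conjOf_iff]
  rfl

theorem evalB_guard_le {p : ℕ} (hp : p ∈ S) : (guard f S).evalB z ν ≤ ν f ⇨ ν p :=
  le_evalB_guard_iff.1 le_rfl p hp

theorem evalB_relativize (A : Fml) :
    (A.relativize f S).evalB z ν = (guard f S).evalB z ν ⇨ A.evalB (ν f) ν := by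
  rw [relativize, evalB, evalB_substBot]
  rfl

end Fml

open Fml

def IntEntails (A B : Fml) : Prop :=
  ∀ (α : Type) [HeytingAlgebra α] (ν : ℕ → α), A.eval ν ≤ B.eval ν

theorem imp_mem_intLPos {A B : Fml} (hA : A.Positive) (hB : B.Positive) (h : IntEntails A B) :
    imp A B ∈ IntLPos :=
  ⟨fun α _ ν => himp_eq_top_iff.2 (h α ν), hA, hB⟩

def guardedLogic (P : Set Fml) : Set Fml := {A | ∀ f, A.relativize f A.vars ∈ P}

namespace IsPosLogic

variable {P : Set Fml} {A B : Fml}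

theorem mem_of_intEntails (hP : IsPosLogic P) (hA : A ∈ P) (hB : B.Positive)
    (h : IntEntails A B) : B ∈ P :=
  hP.mp A B (hP.int_sub (imp_mem_intLPos (hP.pos hA) hB h)) hA

theorem mem_of_subst_intEntails (hP : IsPosLogic P) (hA : A ∈ P) {ρ : ℕ → Fml} (hρ : PosSubst ρ)
    (hB : B.Positive) (h : IntEntails (A.subst ρ) B) : B ∈ P :=
  hP.mem_of_intEntails (hP.subst_closed A hA ρ hρ) hB h

theorem relativize_mem_iff (hP : IsPosLogic P) {f : ℕ} {S : Finset ℕ} (hS : A.vars ⊆ S) :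
    A.relativize f S ∈ P ↔ A.relativize f A.vars ∈ P := by
  constructor
  · intro h
    -- renaming the variables of `S` outside `A` to `f` turns their guards into `f → f`
    let r : ℕ → ℕ := fun n => if n ∈ A.vars then n else f
    refine hP.mem_of_subst_intEntails h (ρ := fun n => var (r n)) (fun _ => trivial)
      relativize_positive fun α _ ν => ?_
    simp only [eval, evalB_subst, evalB_relativize, evalB, r, ite_self]
    refine himp_le_himp (le_evalB_guard_iff.2 fun p _ => ?_)
      (le_of_eq (evalB_congr _ fun p hp => by simp only [if_pos hp]))
    by_cases hp : p ∈ A.vars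
    · simp only [if_pos hp, ite_self]
      exact evalB_guard_le hp
    · simp only [if_neg hp, ite_self, himp_self, le_top]
  · intro h
    refine hP.mem_of_intEntails h relativize_positive fun α _ ν => ?_
    rw [eval, eval, evalB_relativize, evalB_relativize]
    exact himp_le_himp_right (le_evalB_guard_iff.2 fun p hp => evalB_guard_le (hS hp))

theorem intL_subset_guardedLogic (hP : IsPosLogic P) : IntL ⊆ guardedLogic P := fun A hA f =>
  hP.int_sub ⟨fun α _ ν => by
    rw [eval, evalB_relativize, himp_eq_top_iff]
    exact le_evalB_of_mem_IntL hA fun p hp => le_himp_iff.1 (evalB_guard_le hp),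
    relativize_positive⟩

theorem guardedLogic_mp (hP : IsPosLogic P) (hAB : imp A B ∈ guardedLogic P)
    (hA : A ∈ guardedLogic P) : B ∈ guardedLogic P := fun f => by
  have hX : (imp A B).relativize f (A.vars ∪ B.vars) ∈ P := hAB f
  have hY : A.relativize f (A.vars ∪ B.vars) ∈ P :=
    (hP.relativize_mem_iff Finset.subset_union_left).2 (hA f)
  refine (hP.relativize_mem_iff (S := A.vars ∪ B.vars) Finset.subset_union_right).1
    (hP.mp _ _ (hP.mem_of_intEntails hX ⟨relativize_positive, relativize_positive⟩ ?_) hY)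
  intro α _ ν
  simp only [eval, evalB, evalB_relativize]
  exact himp_himp_le_himp_himp_himp

theorem guardedLogic_subst (hP : IsPosLogic P) (hA : A ∈ guardedLogic P) (σ : ℕ → Fml) :
    A.subst σ ∈ guardedLogic P := fun f => by
  obtain ⟨f₀, hf₀⟩ := Infinite.exists_notMem_finset A.vars
  let ρ : ℕ → Fml := fun n => (Function.update σ f₀ bot n).substBot (var f)
  refine hP.mem_of_subst_intEntails (hA f₀) (ρ := ρ)
    (fun n => substBot_positive (C := var f) trivial _) relativize_positive fun α _ ν => ?_
  have hρf₀ : (ρ f₀).eval ν = ν f := by simp only [ρ, Function.update_self]; rfl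
  have hρ : ∀ p ∈ A.vars, (ρ p).eval ν = (σ p).evalB (ν f) ν := fun p hp => by
    rw [eval, evalB_substBot, Function.update_of_ne (ne_of_mem_of_not_mem hp hf₀)]
    rfl
  simp only [eval] at hρf₀ hρ
  simp only [eval, evalB_subst, evalB_relativize, hρf₀]
  refine himp_le_himp (le_evalB_guard_iff.2 fun p hp => ?_) (le_of_eq (evalB_congr _ hρ))
  rw [hρf₀, hρ p hp, le_himp_iff]
  exact le_evalB inf_le_right fun q hq =>
    le_himp_iff.1 (evalB_guard_le (mem_vars_subst hp hq))

theorem mem_of_mem_guardedLogic (hP : IsPosLogic P) (hA : A ∈ guardedLogic P)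
    (hApos : A.Positive) : A ∈ P := by
  obtain ⟨f, hf⟩ := Infinite.exists_notMem_finset A.vars
  let ρ : ℕ → Fml := Function.update var f (conjOf A.vars)
  have hρ : PosSubst ρ := fun n => by
    rcases eq_or_ne n f with rfl | hn
    · simp only [ρ, Function.update_self]
      exact conjList_positive _
    · simp only [ρ, Function.update_of_ne hn]
      trivial
  refine hP.mem_of_subst_intEntails (hA f) hρ hApos fun α _ ν => ?_
  have hρν : ∀ p ∈ A.vars, (ρ p).eval ν = ν p := fun p hp => by
    simp only [ρ, Function.update_of_ne (ne_of_mem_of_not_mem hp hf)]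
    rfl
  simp only [eval] at hρν
  simp only [eval, evalB_subst, evalB_relativize]
  have hguard : (guard f A.vars).evalB ⊥ (fun n => (ρ n).evalB ⊥ ν) = ⊤ :=
    top_le_iff.1 <| le_evalB_guard_iff.2 fun p hp => by
      rw [hρν p hp, le_himp_iff, top_inf_eq]
      simp only [ρ, Function.update_self]
      exact le_evalB_conjOf_iff.1 le_rfl p hp
  rw [hguard, top_himp, evalB_eq_of_positive _ ⊥ _ hApos]
  exact le_of_eq (evalB_congr _ hρν)

theorem subset_guardedLogic (hP : IsPosLogic P) : P ⊆ guardedLogic P := fun A hA f =>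
  hP.mem_of_intEntails hA relativize_positive fun α _ ν => by
    rw [eval, eval, evalB_relativize, evalB_eq_of_positive (ν f) ⊥ ν (hP.pos hA)]
    exact le_himp

theorem isSILogic_guardedLogic (hP : IsPosLogic P) : IsSILogic (guardedLogic P) :=
  ⟨hP.intL_subset_guardedLogic, fun _ _ => hP.guardedLogic_mp,
    fun _ hA => hP.guardedLogic_subst hA⟩

end IsPosLogic

theorem subset_intPlus (Γ : Set Fml) : Γ ⊆ IntPlus Γ := fun _ hA =>
  Set.mem_sInter.2 fun _ hL => hL.2 hA

theorem intPlus_subset {Γ L : Set Fml} (hL : IsSILogic L) (hΓ : Γ ⊆ L) : IntPlus Γ ⊆ L :=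
  Set.sInter_subset_of_mem ⟨hL, hΓ⟩

/-- every positive logic P is the positive fragment of Int + P, and
Int + P is the least superintuitionistic logic with positive fragment P. -/
theorem stmt6 (P : Set Fml) (hP : IsPosLogic P) :
    P = IntPlus P ∩ PosFml ∧
    ∀ L : Set Fml, IsSILogic L → L ∩ PosFml = P → IntPlus P ⊆ L := by
  have hGP : IntPlus P ⊆ guardedLogic P :=
    intPlus_subset hP.isSILogic_guardedLogic hP.subset_guardedLogic
  refine ⟨Set.Subset.antisymm (Set.subset_inter (subset_intPlus P) hP.pos) ?_,
    fun L hL hLP => intPlus_subset hL (hLP ▸ Set.inter_subset_left)⟩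
  rintro A ⟨hA, hApos⟩
  exact hP.mem_of_mem_guardedLogic (hGP hA) hApos
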